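/- Continuous calibration: let m ∈ M with ‖m‖₁ > 0 and a ∈ (0,1), and let (c_l) ⊂ M be a relatively compact sequence (in L¹(Ω)) with SD_m(c_l) → inf_{c∈M} SD_m(c). Then D_m(I_{[a,1]}∘c_l) → sup_{s∈S} D_m(s) as l → ∞. -/

import Mathlib

open MeasureTheory Filter

noncomputable section

/-- The unit cube `[0,1]^n`. -/
def cube (n : ℕ) : Set (Fin n → ℝ) := Set.univ.pi fun _ => Set.Icc (0:ℝ) 1

/-- The (normalized) Lebesgue measure on the unit cube. -/
def lam (n : ℕ) : Measure (Fin n → ℝ) := volume.restrict (cube n)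

/-- The `L¹`-volume `‖f‖₁ = ∫ f dλ` (for nonnegative `f`). -/
def vol1 (n : ℕ) (f : (Fin n → ℝ) → ℝ) : ℝ := ∫ ω, f ω ∂(lam n)

/-- The Dice score `D_m(s) = 2∫ s·m dλ / (‖s‖₁ + ‖m‖₁)`. -/
def Dice (n : ℕ) (m s : (Fin n → ℝ) → ℝ) : ℝ :=
  2 * (∫ ω, s ω * m ω ∂(lam n)) / (vol1 n s + vol1 n m)

/-- The soft-Dice loss `SD_m(c) = 1 - 2∫ c·m dλ / (‖c‖₁ + ‖m‖₁)`. -/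
def softDice (n : ℕ) (m c : (Fin n → ℝ) → ℝ) : ℝ :=
  1 - 2 * (∫ ω, c ω * m ω ∂(lam n)) / (vol1 n c + vol1 n m)

/-- Membership in `M`: measurable with values in `[0,1]`. -/
def MemM (n : ℕ) (m : (Fin n → ℝ) → ℝ) : Prop :=
  Measurable m ∧ ∀ ω, m ω ∈ Set.Icc (0:ℝ) 1

/-- Membership in `S`: measurable with values in `{0,1}`. -/
def MemS (n : ℕ) (s : (Fin n → ℝ) → ℝ) : Prop :=
  Measurable s ∧ ∀ ω, s ω = 0 ∨ s ω = 1

/-- The set of soft-Dice values over `M`. -/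
def SDvals (n : ℕ) (m : (Fin n → ℝ) → ℝ) : Set ℝ :=
  {x : ℝ | ∃ c, MemM n c ∧ x = softDice n m c}

/-- The set of Dice values over `S`. -/
def Dvals (n : ℕ) (m : (Fin n → ℝ) → ℝ) : Set ℝ :=
  {x : ℝ | ∃ s, MemS n s ∧ x = Dice n m s}

/-! Writing `t = sup_S D_m`, the inequality `D_m(c) ≥ t` is linear in `c`:
it says `∫ c (2m - t) ≥ t ‖m‖₁`. Thresholding `c` at `{2m ≥ D_m(c)}` can only increase
`∫ c (2m - D_m(c))`, so `sup_M D_m = t` and `inf_M SD_m = 1 - t`. Every `L¹`-limit `g` of a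
subsequence of `(c_l)` therefore maximizes `D_m` over `M`, which forces `g(2m - t) = (2m - t)⁺`
a.e., i.e. `g = 1` on `{2m > t}` and `g = 0` on `{2m < t}`. Off the interface `{2m = t}` the
thresholded function then differs from `g` only where `|c_l - g| ≥ min(a, 1 - a)`, which gives
`|D_m(I_{[a,1]} ∘ c_l) - t| ≲ ‖c_l - g‖₁ / min(a, 1 - a)`. -/

/-- The indicator `I_{[a,1]} ∘ c` of the superlevel set `{c ≥ a}`. -/
def threshold {X : Type*} (a : ℝ) (c : X → ℝ) : X → ℝ := fun ω => if a ≤ c ω then 1 else 0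

lemma mul_sub_le_ite_mul_sub {c x t : ℝ} (hc : c ∈ Set.Icc (0:ℝ) 1) :
    c * (x - t) ≤ (if t ≤ x then 1 else 0) * (x - t) := by
  split_ifs with h <;> nlinarith [hc.1, hc.2]

lemma ite_mul_sub_eq_max (x t : ℝ) :
    (if t ≤ x then 1 else 0) * (x - t) = max (x - t) 0 := by
  split_ifs with h
  · rw [one_mul, max_eq_left (sub_nonneg.2 h)]
  · rw [zero_mul, max_eq_right (by linarith)]

lemma min_mul_abs_ite_sub_mul_le {a c g x : ℝ} (hg : g * x = max x 0) :
    min a (1 - a) * |((if a ≤ c then 1 else 0) - g) * x| ≤ |c - g| * |x| := by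
  have hmin₁ := min_le_left a (1 - a)
  have hmin₂ := min_le_right a (1 - a)
  rcases lt_trichotomy x 0 with hx | rfl | hx
  · have hg0 : g = 0 := by
      rw [max_eq_right hx.le] at hg
      exact (mul_eq_zero.1 hg).resolve_right hx.ne
    subst hg0
    split_ifs with hac
    · rw [sub_zero, one_mul, sub_zero]
      exact mul_le_mul_of_nonneg_right (hmin₁.trans (hac.trans (le_abs_self c)))
        (abs_nonneg x)
    · rw [sub_self, zero_mul, abs_zero, mul_zero]
      positivity
  · simp
  · have hg1 : g = 1 := by
      rw [max_eq_left hx.le] at hg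
      exact (mul_eq_right₀ hx.ne').1 hg
    subst hg1
    split_ifs with hac
    · rw [sub_self, zero_mul, abs_zero, mul_zero]
      positivity
    · rw [zero_sub, neg_one_mul, abs_neg, abs_sub_comm]
      exact mul_le_mul_of_nonneg_right (hmin₂.trans (by linarith [le_abs_self (1 - c)]))
        (abs_nonneg x)

lemma abs_integral_mul_sub_integral_mul_le {X : Type*} [MeasurableSpace X] {μ : Measure X}
    {u g w : X → ℝ} (hu : Integrable u μ) (hg : Integrable g μ)
    (hw : AEStronglyMeasurable w μ) (hw1 : ∀ x, |w x| ≤ 1) :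
    |∫ x, u x * w x ∂μ - ∫ x, g x * w x ∂μ| ≤ ∫ x, |u x - g x| ∂μ := by
  have hbound : ∀ᵐ x ∂μ, ‖w x‖ ≤ 1 := ae_of_all _ hw1
  rw [← integral_sub (hu.mul_bdd hw hbound) (hg.mul_bdd hw hbound)]
  refine abs_integral_le_integral_abs.trans
    (integral_mono ((hu.mul_bdd hw hbound).sub (hg.mul_bdd hw hbound)).abs (hu.sub hg).abs
      fun x => ?_)
  rw [← sub_mul, abs_mul]
  exact mul_le_of_le_one_right (abs_nonneg _) (hw1 x)

lemma tendsto_integral_mul_of_tendsto_integral_abs_sub {X : Type*} [MeasurableSpace X]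
    {μ : Measure X} {u : ℕ → X → ℝ} {g w : X → ℝ} (hu : ∀ l, Integrable (u l) μ)
    (hg : Integrable g μ) (hw : AEStronglyMeasurable w μ) (hw1 : ∀ x, |w x| ≤ 1)
    (hL1 : Tendsto (fun l => ∫ x, |u l x - g x| ∂μ) atTop (nhds 0)) :
    Tendsto (fun l => ∫ x, u l x * w x ∂μ) atTop (nhds (∫ x, g x * w x ∂μ)) := by
  rw [tendsto_iff_dist_tendsto_zero]
  exact squeeze_zero (fun _ => dist_nonneg) (fun l =>
    abs_integral_mul_sub_integral_mul_le (hu l) hg hw hw1) hL1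

instance (n : ℕ) : IsFiniteMeasure (lam n) := by
  constructor
  rw [lam, Measure.restrict_apply_univ]
  exact (isCompact_univ_pi fun _ => isCompact_Icc).measure_lt_top

section Dice

variable {n : ℕ} {m c g : (Fin n → ℝ) → ℝ}

lemma MemS.memM (h : MemS n c) : MemM n c :=
  ⟨h.1, fun ω => by rcases h.2 ω with h' | h' <;> simp [h']⟩

lemma memS_threshold (hc : Measurable c) (a : ℝ) : MemS n (threshold a c) := by
  refine ⟨Measurable.ite (measurableSet_le measurable_const hc) measurable_const
    measurable_const, fun ω => ?_⟩
  unfold threshold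
  split_ifs <;> simp

lemma MemM.abs_le_one (h : MemM n c) (ω : Fin n → ℝ) : |c ω| ≤ 1 :=
  abs_le.2 ⟨by linarith [(h.2 ω).1], (h.2 ω).2⟩

lemma MemM.integrable (h : MemM n c) : Integrable c (lam n) :=
  Integrable.of_bound h.1.aestronglyMeasurable 1 (ae_of_all _ h.abs_le_one)

lemma MemM.integrable_mul (h : MemM n c) {w : (Fin n → ℝ) → ℝ} (hw : Integrable w (lam n)) :
    Integrable (fun ω => c ω * w ω) (lam n) :=
  hw.bdd_mul h.1.aestronglyMeasurable (ae_of_all _ h.abs_le_one)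

lemma MemM.integrable_two_mul_sub (hm : MemM n m) (t : ℝ) :
    Integrable (fun ω => 2 * m ω - t) (lam n) :=
  (hm.integrable.const_mul 2).sub (integrable_const t)

lemma MemM.vol1_nonneg (h : MemM n c) : 0 ≤ vol1 n c :=
  integral_nonneg fun ω => (h.2 ω).1

lemma vol1_add_pos (hc : MemM n c) (hpos : 0 < vol1 n m) : 0 < vol1 n c + vol1 n m := by
  linarith [hc.vol1_nonneg]

lemma softDice_eq_one_sub_dice : softDice n m c = 1 - Dice n m c := rfl

lemma integral_mul_two_mul_sub (hc : MemM n c) (hm : MemM n m) (t : ℝ) :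
    ∫ ω, c ω * (2 * m ω - t) ∂(lam n) = 2 * (∫ ω, c ω * m ω ∂(lam n)) - t * vol1 n c := by
  simp only [mul_sub, mul_left_comm _ (2 : ℝ), mul_comm _ t]
  rw [integral_sub ((hc.integrable_mul hm.integrable).const_mul 2)
    (hc.integrable.const_mul t), integral_const_mul, integral_const_mul, vol1]

lemma dice_sub_eq (hc : MemM n c) (hm : MemM n m) (hpos : 0 < vol1 n m) (t : ℝ) :
    Dice n m c - t
      = (∫ ω, c ω * (2 * m ω - t) ∂(lam n) - t * vol1 n m) / (vol1 n c + vol1 n m) := by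
  rw [integral_mul_two_mul_sub hc hm, Dice, eq_div_iff (vol1_add_pos hc hpos).ne', sub_mul,
    div_mul_cancel₀ _ (vol1_add_pos hc hpos).ne']
  ring

lemma le_dice_iff (hc : MemM n c) (hm : MemM n m) (hpos : 0 < vol1 n m) (t : ℝ) :
    t ≤ Dice n m c ↔ t * vol1 n m ≤ ∫ ω, c ω * (2 * m ω - t) ∂(lam n) := by
  rw [← sub_nonneg, dice_sub_eq hc hm hpos, le_div_iff₀ (vol1_add_pos hc hpos), zero_mul,
    sub_nonneg]

lemma dice_le_iff (hc : MemM n c) (hm : MemM n m) (hpos : 0 < vol1 n m) (t : ℝ) :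
    Dice n m c ≤ t ↔ ∫ ω, c ω * (2 * m ω - t) ∂(lam n) ≤ t * vol1 n m := by
  rw [← sub_nonpos, dice_sub_eq hc hm hpos, div_le_iff₀ (vol1_add_pos hc hpos), zero_mul,
    sub_nonpos]

lemma integral_mul_two_mul_sub_dice (hc : MemM n c) (hm : MemM n m) (hpos : 0 < vol1 n m) :
    ∫ ω, c ω * (2 * m ω - Dice n m c) ∂(lam n) = Dice n m c * vol1 n m :=
  le_antisymm ((dice_le_iff hc hm hpos _).1 le_rfl) ((le_dice_iff hc hm hpos _).1 le_rfl)

lemma dice_le_one (hc : MemM n c) (hm : MemM n m) (hpos : 0 < vol1 n m) : Dice n m c ≤ 1 := by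
  rw [dice_le_iff hc hm hpos, one_mul]
  exact integral_mono (hc.integrable_mul (hm.integrable_two_mul_sub 1))
    hm.integrable fun ω => by nlinarith [(hc.2 ω).1, (hc.2 ω).2, (hm.2 ω).1, (hm.2 ω).2]

lemma nonempty_Dvals : (Dvals n m).Nonempty :=
  ⟨_, threshold 0 (fun _ => (0 : ℝ)), memS_threshold measurable_const 0, rfl⟩

lemma bddAbove_Dvals (hm : MemM n m) (hpos : 0 < vol1 n m) : BddAbove (Dvals n m) :=
  ⟨1, by rintro _ ⟨s, hs, rfl⟩; exact dice_le_one hs.memM hm hpos⟩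

lemma dice_le_dice_threshold (hc : MemM n c) (hm : MemM n m) (hpos : 0 < vol1 n m) :
    Dice n m c ≤ Dice n m (threshold (Dice n m c) fun ω => 2 * m ω) := by
  have hs := (memS_threshold (hm.1.const_mul 2) (Dice n m c)).memM
  rw [le_dice_iff hs hm hpos, ← integral_mul_two_mul_sub_dice hc hm hpos]
  exact integral_mono (hc.integrable_mul (hm.integrable_two_mul_sub _))
    (hs.integrable_mul (hm.integrable_two_mul_sub _)) fun ω => mul_sub_le_ite_mul_sub (hc.2 ω)

lemma dice_le_sSup_Dvals (hc : MemM n c) (hm : MemM n m) (hpos : 0 < vol1 n m) :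
    Dice n m c ≤ sSup (Dvals n m) :=
  (dice_le_dice_threshold hc hm hpos).trans
    (le_csSup (bddAbove_Dvals hm hpos) ⟨_, memS_threshold (hm.1.const_mul 2) _, rfl⟩)

lemma sInf_SDvals (hm : MemM n m) (hpos : 0 < vol1 n m) :
    sInf (SDvals n m) = 1 - sSup (Dvals n m) := by
  refine IsGLB.csInf_eq ⟨?_, fun b hb => ?_⟩ ?_
  · rintro _ ⟨c, hc, rfl⟩
    exact sub_le_sub_left (dice_le_sSup_Dvals hc hm hpos) 1
  · have : sSup (Dvals n m) ≤ 1 - b := csSup_le nonempty_Dvals <| by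
      rintro _ ⟨s, hs, rfl⟩
      linarith [hb ⟨s, hs.memM, rfl⟩, softDice_eq_one_sub_dice (n := n) (m := m) (c := s)]
    linarith
  · obtain ⟨_, s, hs, rfl⟩ := nonempty_Dvals (n := n) (m := m)
    exact ⟨_, s, hs.memM, rfl⟩

lemma ae_mul_two_mul_sub_eq_max (hg : MemM n g) (hm : MemM n m) (hpos : 0 < vol1 n m)
    (hgmax : Dice n m g = sSup (Dvals n m)) :
    ∀ᵐ ω ∂(lam n), g ω * (2 * m ω - sSup (Dvals n m)) = max (2 * m ω - sSup (Dvals n m)) 0 := by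
  set t := sSup (Dvals n m)
  set s := threshold t fun ω => 2 * m ω
  have hs : MemS n s := memS_threshold (hm.1.const_mul 2) t
  have hgi := hg.integrable_mul (hm.integrable_two_mul_sub t)
  have hsi := hs.memM.integrable_mul (hm.integrable_two_mul_sub t)
  have hle : ∀ ω, g ω * (2 * m ω - t) ≤ s ω * (2 * m ω - t) :=
    fun ω => mul_sub_le_ite_mul_sub (hg.2 ω)
  have hgt := integral_mul_two_mul_sub_dice hg hm hpos
  rw [hgmax] at hgt
  have hst : ∫ ω, s ω * (2 * m ω - t) ∂(lam n) ≤ t * vol1 n m :=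
    (dice_le_iff hs.memM hm hpos t).1 (le_csSup (bddAbove_Dvals hm hpos) ⟨s, hs, rfl⟩)
  have heq := (integral_eq_iff_of_ae_le hgi hsi (ae_of_all _ hle)).1
    (le_antisymm (integral_mono hgi hsi hle) (hgt ▸ hst))
  filter_upwards [heq] with ω hω
  exact hω.trans (ite_mul_sub_eq_max _ _)

lemma abs_integral_threshold_mul_sub_le (hc : MemM n c) (hg : MemM n g) (hm : MemM n m)
    (hpos : 0 < vol1 n m) {a : ℝ} (ha : a ∈ Set.Ioo (0 : ℝ) 1)
    (hgmax : Dice n m g = sSup (Dvals n m)) :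
    |∫ ω, threshold a c ω * (2 * m ω - sSup (Dvals n m))
        - g ω * (2 * m ω - sSup (Dvals n m)) ∂(lam n)|
      ≤ (2 + |sSup (Dvals n m)|) / min a (1 - a) * ∫ ω, |c ω - g ω| ∂(lam n) := by
  set t := sSup (Dvals n m)
  have hδ : 0 < min a (1 - a) := lt_min ha.1 (sub_pos.2 ha.2)
  have hx : ∀ ω, |2 * m ω - t| ≤ 2 + |t| := fun ω => (abs_sub _ _).trans <| by
    rw [abs_mul, abs_two]
    linarith [hm.abs_le_one ω]
  have hpt : ∀ᵐ ω ∂(lam n), |threshold a c ω * (2 * m ω - t) - g ω * (2 * m ω - t)|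
      ≤ (2 + |t|) / min a (1 - a) * |c ω - g ω| := by
    filter_upwards [ae_mul_two_mul_sub_eq_max hg hm hpos hgmax] with ω hω
    rw [← sub_mul, div_mul_eq_mul_div, le_div_iff₀' hδ]
    calc min a (1 - a) * |(threshold a c ω - g ω) * (2 * m ω - t)|
        ≤ |c ω - g ω| * |2 * m ω - t| := min_mul_abs_ite_sub_mul_le hω
      _ ≤ (2 + |t|) * |c ω - g ω| := by
        rw [mul_comm]
        exact mul_le_mul_of_nonneg_right (hx ω) (abs_nonneg _)
  rw [← integral_const_mul]
  exact abs_integral_le_integral_abs.trans (integral_mono_ae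
    (((memS_threshold hc.1 a).memM.integrable_mul (hm.integrable_two_mul_sub t)).sub
      (hg.integrable_mul (hm.integrable_two_mul_sub t))).abs
    ((hc.integrable.sub hg.integrable).abs.const_mul _) hpt)

lemma abs_dice_threshold_sub_sSup_le (hc : MemM n c) (hg : MemM n g) (hm : MemM n m)
    (hpos : 0 < vol1 n m) {a : ℝ} (ha : a ∈ Set.Ioo (0 : ℝ) 1)
    (hgmax : Dice n m g = sSup (Dvals n m)) :
    |Dice n m (threshold a c) - sSup (Dvals n m)|
      ≤ (2 + |sSup (Dvals n m)|) / (min a (1 - a) * vol1 n m) * ∫ ω, |c ω - g ω| ∂(lam n) := by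
  set t := sSup (Dvals n m)
  set s := threshold a c
  have hs : MemM n s := (memS_threshold hc.1 a).memM
  have hgt := integral_mul_two_mul_sub_dice hg hm hpos
  rw [hgmax] at hgt
  rw [dice_sub_eq hs hm hpos, ← hgt, ← integral_sub (hs.integrable_mul
    (hm.integrable_two_mul_sub t)) (hg.integrable_mul (hm.integrable_two_mul_sub t)), abs_div,
    abs_of_pos (vol1_add_pos hs hpos)]
  calc |∫ ω, s ω * (2 * m ω - t) - g ω * (2 * m ω - t) ∂(lam n)| / (vol1 n s + vol1 n m)
      ≤ |∫ ω, s ω * (2 * m ω - t) - g ω * (2 * m ω - t) ∂(lam n)| / vol1 n m :=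
        div_le_div_of_nonneg_left (abs_nonneg _) hpos (le_add_of_nonneg_left hs.vol1_nonneg)
    _ ≤ (2 + |t|) / min a (1 - a) * (∫ ω, |c ω - g ω| ∂(lam n)) / vol1 n m :=
        div_le_div_of_nonneg_right (abs_integral_threshold_mul_sub_le hc hg hm hpos ha hgmax)
          hpos.le
    _ = _ := by ring

lemma tendsto_dice_of_tendsto_integral_abs_sub {u : ℕ → (Fin n → ℝ) → ℝ}
    (hu : ∀ l, MemM n (u l)) (hg : MemM n g) (hm : MemM n m) (hpos : 0 < vol1 n m)
    (hL1 : Tendsto (fun l => ∫ ω, |u l ω - g ω| ∂(lam n)) atTop (nhds 0)) :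
    Tendsto (fun l => Dice n m (u l)) atTop (nhds (Dice n m g)) := by
  have hui := fun l => (hu l).integrable
  have hnum := tendsto_integral_mul_of_tendsto_integral_abs_sub hui hg.integrable
    hm.1.aestronglyMeasurable hm.abs_le_one hL1
  have hvol : Tendsto (fun l => vol1 n (u l)) atTop (nhds (vol1 n g)) := by
    simpa only [mul_one, vol1] using tendsto_integral_mul_of_tendsto_integral_abs_sub hui
      hg.integrable aestronglyMeasurable_const (fun _ => (abs_one (α := ℝ)).le) hL1
  exact (hnum.const_mul 2).div (hvol.add_const _) (vol1_add_pos hg hpos).ne'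

lemma tendsto_dice_threshold_of_tendsto_integral_abs_sub {u : ℕ → (Fin n → ℝ) → ℝ}
    (hu : ∀ l, MemM n (u l)) (hg : MemM n g) (hm : MemM n m) (hpos : 0 < vol1 n m)
    {a : ℝ} (ha : a ∈ Set.Ioo (0 : ℝ) 1) (hgmax : Dice n m g = sSup (Dvals n m))
    (hL1 : Tendsto (fun l => ∫ ω, |u l ω - g ω| ∂(lam n)) atTop (nhds 0)) :
    Tendsto (fun l => Dice n m (threshold a (u l))) atTop (nhds (sSup (Dvals n m))) := by
  rw [tendsto_iff_norm_sub_tendsto_zero]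
  refine squeeze_zero (fun _ => norm_nonneg _)
    (fun l => abs_dice_threshold_sub_sSup_le (hu l) hg hm hpos ha hgmax) ?_
  simpa only [mul_zero] using hL1.const_mul _

end Dice

theorem soft_dice_calibrated_to_dice
    (n : ℕ) (m : (Fin n → ℝ) → ℝ) (hm : MemM n m) (hpos : 0 < vol1 n m)
    (a : ℝ) (ha : a ∈ Set.Ioo (0:ℝ) 1)
    (c : ℕ → (Fin n → ℝ) → ℝ) (hc : ∀ l, MemM n (c l))
    (hcompact : ∀ φ : ℕ → ℕ, StrictMono φ → ∃ ψ : ℕ → ℕ, StrictMono ψ ∧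
      ∃ g : (Fin n → ℝ) → ℝ, MemM n g ∧
        Tendsto (fun l => ∫ ω, |c (φ (ψ l)) ω - g ω| ∂(lam n)) atTop (nhds 0))
    (hconv : Tendsto (fun l => softDice n m (c l)) atTop (nhds (sInf (SDvals n m)))) :
    Tendsto (fun l => Dice n m (fun ω => if a ≤ c l ω then (1:ℝ) else 0))
      atTop (nhds (sSup (Dvals n m))) := by
  refine tendsto_of_subseq_tendsto fun φ hφ => ?_
  obtain ⟨φ', -, hφ'⟩ := strictMono_subseq_of_tendsto_atTop hφ
  obtain ⟨ψ, hψ, g, hg, hL1⟩ := hcompact (φ ∘ φ') hφ'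
  have hgmax : Dice n m g = sSup (Dvals n m) := by
    have hSD : Tendsto (fun l => softDice n m (c (φ (φ' (ψ l))))) atTop
        (nhds (1 - Dice n m g)) :=
      (tendsto_dice_of_tendsto_integral_abs_sub (fun l => hc _) hg hm hpos hL1).const_sub 1
    have hlim := tendsto_nhds_unique (hconv.comp (hφ'.comp hψ).tendsto_atTop) hSD
    rw [sInf_SDvals hm hpos] at hlim
    linarith
  exact ⟨φ' ∘ ψ,
    tendsto_dice_threshold_of_tendsto_integral_abs_sub (fun l => hc _) hg hm hpos ha hgmax hL1⟩
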